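/- Let x, y ∈ ℂ^{n×r} both have full rank r, and let U ∈ U(r) be such that x* y U is positive semidefinite. Then for every t ∈ [0,1] the matrix (1−t) x + t y U has full rank r. Consequently, the Bures–Wasserstein geodesic γ(t) = ((1−t)x + t y U)((1−t)x + t y U)* connecting x x* to y y* stays within the set of positive semidefinite Hermitian matrices of rank exactly r. -/

import Mathlib

open Matrix Filter
open scoped ComplexOrder

noncomputable def frob {p q : ℕ} (x : Matrix (Fin p) (Fin q) ℂ) : ℝ :=
  Real.sqrt (Matrix.trace (xᴴ * x)).re

noncomputable def rinner {p q : ℕ} (X Y : Matrix (Fin p) (Fin q) ℂ) : ℝ :=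
  (Matrix.trace (Xᴴ * Y)).re

/-- The former `Matrix.PosSemidef.sqrt` (removed from Mathlib), with its old definition. -/
noncomputable def psdSqrt {m : Type*} [Fintype m] [DecidableEq m] {A : Matrix m m ℂ}
    (hA : A.PosSemidef) : Matrix m m ℂ :=
  (hA.1.eigenvectorUnitary : Matrix m m ℂ) * diagonal ((↑) ∘ Real.sqrt ∘ hA.1.eigenvalues) *
    (star (hA.1.eigenvectorUnitary : Matrix m m ℂ))

noncomputable def nuclear {p q : ℕ} (x : Matrix (Fin p) (Fin q) ℂ) : ℝ :=
  (Matrix.trace (psdSqrt (Matrix.posSemidef_conjTranspose_mul_self x))).re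

noncomputable def theta {n r : ℕ} (x : Matrix (Fin n) (Fin r) ℂ) : Matrix (Fin n) (Fin n) ℂ :=
  psdSqrt (Matrix.posSemidef_self_mul_conjTranspose x)

noncomputable def psi {n r : ℕ} (x : Matrix (Fin n) (Fin r) ℂ) : Matrix (Fin n) (Fin n) ℂ :=
  frob x • theta x

noncomputable def Dmet {n r : ℕ} (x y : Matrix (Fin n) (Fin r) ℂ) : ℝ :=
  ⨅ U : Matrix.unitaryGroup (Fin r) ℂ, frob (x - y * (U : Matrix (Fin r) (Fin r) ℂ))

noncomputable def dmet {n r : ℕ} (x y : Matrix (Fin n) (Fin r) ℂ) : ℝ :=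
  ⨅ U : Matrix.unitaryGroup (Fin r) ℂ,
    frob (x - y * (U : Matrix (Fin r) (Fin r) ℂ)) * frob (x + y * (U : Matrix (Fin r) (Fin r) ℂ))

/-!
If `z = (1 - t) x + t y U` kills a vector `v`, pair `z v = 0` with `x v`: this gives
`(1 - t) ‖x v‖² + t ⟪x v, y U v⟫ = 0`, and `⟪x v, y U v⟫ = v* (x* y U) v ≥ 0`. Both terms are
nonnegative, so for `t < 1` we get `x v = 0`, hence `v = 0` since `x` has full column rank.
At `t = 1` the matrix is `y U`, whose rank is that of `y`.
-/

namespace Matrix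

variable {m n : Type*} [Fintype n]

theorem rank_le_rank_of_ker_le {K : Type*} [Field K] {A B : Matrix m n K}
    (h : LinearMap.ker A.mulVecLin ≤ LinearMap.ker B.mulVecLin) : B.rank ≤ A.rank := by
  have hA := A.mulVecLin.finrank_range_add_finrank_ker
  have hB := B.mulVecLin.finrank_range_add_finrank_ker
  have := Submodule.finrank_mono h
  unfold rank
  omega

variable [Fintype m] {𝕜 : Type*} [RCLike 𝕜]

theorem mulVec_eq_zero_of_smul_add_smul_mulVec_eq_zero {A B : Matrix m n 𝕜}
    (hAB : (Aᴴ * B).PosSemidef) {s t : ℝ} (hs : 0 < s) (ht : 0 ≤ t) {v : n → 𝕜}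
    (hv : (s • A + t • B) *ᵥ v = 0) : A *ᵥ v = 0 := by
  set a := A *ᵥ v
  have hcross : 0 ≤ star a ⬝ᵥ B *ᵥ v := by
    simpa [a, star_mulVec, dotProduct_mulVec, vecMul_vecMul] using
      hAB.dotProduct_mulVec_nonneg v
  have hsum : s • (star a ⬝ᵥ a) + t • (star a ⬝ᵥ B *ᵥ v) = 0 := by
    rw [← dotProduct_smul, ← dotProduct_smul, ← dotProduct_add, ← smul_mulVec, ← smul_mulVec,
      ← add_mulVec, hv, dotProduct_zero]
  have hself : s • (star a ⬝ᵥ a) = 0 :=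
    ((add_eq_zero_iff_of_nonneg (smul_nonneg hs.le (dotProduct_star_self_nonneg a))
      (smul_nonneg ht hcross)).1 hsum).1
  exact dotProduct_star_self_eq_zero.1 ((smul_eq_zero.1 hself).resolve_left hs.ne')

theorem rank_le_rank_smul_add_smul_of_posSemidef {A B : Matrix m n 𝕜}
    (hAB : (Aᴴ * B).PosSemidef) {s t : ℝ} (hs : 0 < s) (ht : 0 ≤ t) :
    A.rank ≤ (s • A + t • B).rank :=
  rank_le_rank_of_ker_le fun _ hv => mulVec_eq_zero_of_smul_add_smul_mulVec_eq_zero hAB hs ht hv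

end Matrix

/-- if `x, y ∈ ℂ^{n×r}` are full rank and `U ∈ U(r)` is such that `x* y U`
is positive semidefinite, then `(1−t) x + t y U` has full rank `r` for every `t ∈ [0,1]`;
consequently the Bures–Wasserstein geodesic
`γ(t) = ((1−t)x + t y U)((1−t)x + t y U)*` stays in the positive semidefinite Hermitian
matrices of rank exactly `r`. -/
theorem geodesic_rank_preserving (n r : ℕ) (x y : Matrix (Fin n) (Fin r) ℂ)
    (hx : x.rank = r) (hy : y.rank = r)
    (U : Matrix (Fin r) (Fin r) ℂ) (hU : U ∈ Matrix.unitaryGroup (Fin r) ℂ)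
    (hpsd : (xᴴ * y * U).PosSemidef) :
    ∀ t : ℝ, t ∈ Set.Icc (0 : ℝ) 1 →
      ((1 - t) • x + t • (y * U)).rank = r ∧
      ((((1 - t) • x + t • (y * U)) * ((1 - t) • x + t • (y * U))ᴴ).PosSemidef ∧
        (((1 - t) • x + t • (y * U)) * ((1 - t) • x + t • (y * U))ᴴ).rank = r) := by
  rintro t ⟨ht0, ht1⟩
  set z := (1 - t) • x + t • (y * U)
  have hz : z.rank = r := by
    rcases ht1.lt_or_eq with ht1 | rfl
    · rw [Matrix.mul_assoc] at hpsd
      exact le_antisymm (rank_le_width z)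
        (hx.ge.trans (rank_le_rank_smul_add_smul_of_posSemidef hpsd (sub_pos.2 ht1) ht0))
    · simpa [z, rank_mul_eq_left_of_isUnit_det U y (UnitaryGroup.det_isUnit ⟨U, hU⟩)] using hy
  exact ⟨hz, posSemidef_self_mul_conjTranspose z, (rank_self_mul_conjTranspose z).trans hz⟩
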